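/- Let G = G36 = ⟨a, b, c | a⁴ = b⁴ = c² = [b,c] = 1, a⁻¹ba = b⁻¹, cac = a⁻¹⟩, H = ⟨b, c, a²⟩, and H' = ⟨b², c, a⟩. Let λ be the character of H with λ(b) = i, λ(c) = λ(a²) = 1, and λ' the character of H' with λ'(a) = λ'(c) = 1, λ'(b²) = −1. Then the induced characters Ind_H^G(λ) and Ind_{H'}^G(λ') are equal. -/

import Mathlib

/-- The relations of the presentation
`G36 = ⟨a, b, c | a⁴ = b⁴ = c² = 1, [b,c] = 1, a⁻¹ba = b⁻¹, cac = a⁻¹⟩`,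
with `a, b, c` the generators `FreeGroup.of 0, 1, 2`. -/
def G36rels : Set (FreeGroup (Fin 3)) :=
  { (FreeGroup.of 0) ^ 4, (FreeGroup.of 1) ^ 4, (FreeGroup.of 2) ^ 2,
    FreeGroup.of 1 * FreeGroup.of 2 * (FreeGroup.of 1)⁻¹ * (FreeGroup.of 2)⁻¹,
    (FreeGroup.of 0)⁻¹ * FreeGroup.of 1 * FreeGroup.of 0 * FreeGroup.of 1,
    FreeGroup.of 2 * FreeGroup.of 0 * FreeGroup.of 2 * FreeGroup.of 0 }

open Classical in
/-- The induced character: for a finite group `G`, a subgroup `H` and a function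
`χ : H → ℂ`, `Ind_H^G χ (g) = (1/|H|) · Σ_{x ∈ G} χ°(x⁻¹ g x)`, where `χ°` is the
extension of `χ` by zero to `G`. -/
noncomputable def indChar {G : Type*} [Group G] [Fintype G] (H : Subgroup G)
    (χ : H → ℂ) : G → ℂ := fun g =>
  (Nat.card H : ℂ)⁻¹ * ∑ x : G, if h : x⁻¹ * g * x ∈ H then χ ⟨x⁻¹ * g * x, h⟩ else 0


/-!
Both `H` and `H'` have index two: writing every element in the normal form `c ^ z * b ^ y * a ^ x`,
they are the kernels of the parity of `x` and of `y`. For an index-two subgroup `H`, a linear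
character `λ` and any `t ∉ H`, `Ind λ` vanishes off `H` and equals `λ g + λ (t⁻¹ g t)` on `H`.
Both `λ` and `λ'` are restrictions of `c ^ z * b ^ y * a ^ x ↦ i ^ y`; conjugation by `a` turns
`y` into `-y`, while conjugation by `b` keeps `y` if `x` is even and adds `2` otherwise. Hence both
induced characters equal `2 i ^ y` when `x` and `y` are even, and vanish otherwise.

The exponents of the normal form are read off a homomorphism to an explicit model of `G36` on the
triples `(z, y, x)`.
-/

theorem MonoidHom.index_ker_eq_two {G : Type*} [Group G] (f : G →* Multiplicative (ZMod 2))
    {t : G} (ht : f t ≠ 1) : f.ker.index = 2 := by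
  refine Subgroup.index_eq_two_iff_exists_notMem_and.2 ⟨t, ht, fun g => ?_⟩
  simp only [MonoidHom.mem_ker, map_mul]
  generalize f g = u, f t = v at ht ⊢
  revert u v
  decide

theorem Multiplicative.ofAdd_one_pow_eq_one_iff (n : ℕ) :
    (Multiplicative.ofAdd (1 : ZMod 2)) ^ n = 1 ↔ 2 ∣ n := by
  rw [← ofAdd_nsmul, nsmul_one, ofAdd_eq_one, ZMod.natCast_eq_zero_iff]

theorem Subgroup.closure_apply_eq_of_eqOn {G M : Type*} [Group G] [Monoid M] {s : Set G}
    (l : Subgroup.closure s →* M) (f : G → M) (one : f 1 = 1)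
    (mul : ∀ x ∈ Subgroup.closure s, ∀ y ∈ Subgroup.closure s, f (x * y) = f x * f y)
    (eqOn : ∀ x (hx : x ∈ s), l ⟨x, Subgroup.subset_closure hx⟩ = f x) (x : Subgroup.closure s) :
    l x = f x := by
  let ρ : Subgroup.closure s →* M :=
    { toFun := fun x => f x, map_one' := one, map_mul' := fun x y => mul x x.2 y y.2 }
  have := MonoidHom.eq_of_eqOn_dense Subgroup.closure_closure_coe_preimage (f := l) (g := ρ)
    fun x hx => eqOn x hx
  exact DFunLike.congr_fun this x

open Classical in
theorem indChar_of_index_eq_two {G : Type*} [Group G] [Fintype G] {H : Subgroup G}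
    (hH : H.index = 2) {t : G} (ht : t ∉ H) (l : H →* ℂ) (f : G → ℂ) (hf : ∀ h : H, l h = f h)
    (g : G) : indChar H (fun x => l x) g = if g ∈ H then f g + f (t⁻¹ * g * t) else 0 := by
  have hN := Subgroup.normal_of_index_eq_two hH
  have conj_mem (x : G) : x⁻¹ * g * x ∈ H ↔ g ∈ H := by
    rw [hN.mem_comm_iff, mul_inv_cancel_left]
  set F : G → ℂ := fun x => if h : x⁻¹ * g * x ∈ H then l ⟨x⁻¹ * g * x, h⟩ else 0 with hF
  unfold indChar
  rw [← hF]
  split_ifs with hg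
  case neg => simp [hF, conj_mem, hg]
  have F_eq (k : G) (hk : k ∈ H) (y : G) (hy : y ∈ H) (x : G) (hx : x⁻¹ * g * x = y⁻¹ * k * y) :
      F x = f k := by
    have hxH : x⁻¹ * g * x ∈ H := (conj_mem x).2 hg
    have : (⟨x⁻¹ * g * x, hxH⟩ : H) = (⟨y, hy⟩ : H)⁻¹ * ⟨k, hk⟩ * ⟨y, hy⟩ := Subtype.ext hx
    rw [hF]
    beta_reduce
    rw [dif_pos hxH, this, map_mul, map_mul, mul_comm, ← mul_assoc, ← map_mul, mul_inv_cancel,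
      map_one, one_mul, hf]
  have htg : t⁻¹ * g * t ∈ H := (conj_mem t).2 hg
  -- Exactly one of `x` and `t * x` lies in `H`.
  have pair (x : G) : F x + F (t * x) = f g + f (t⁻¹ * g * t) := by
    by_cases hx : x ∈ H
    · rw [F_eq g hg x hx x rfl, F_eq _ htg x hx (t * x) (by group)]
    · have htx : t * x ∈ H := (Subgroup.mul_mem_iff_of_index_two hH).2 (iff_of_false ht hx)
      have htx' : t⁻¹ * x ∈ H :=
        (Subgroup.mul_mem_iff_of_index_two hH).2 (iff_of_false (inv_mem_iff.not.2 ht) hx)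
      rw [F_eq _ htg _ htx' x (by group), F_eq g hg _ htx (t * x) rfl, add_comm]
  have hsum : 2 * ∑ x, F x = Nat.card G * (f g + f (t⁻¹ * g * t)) :=
    calc 2 * ∑ x, F x = ∑ x, F x + ∑ x, F (t * x) := by
          rw [two_mul]
          congr 1
          exact (Equiv.sum_comp (Equiv.mulLeft t) F).symm
      _ = Nat.card G * (f g + f (t⁻¹ * g * t)) := by
          simp [← Finset.sum_add_distrib, pair, Nat.card_eq_fintype_card, mul_add]
  have hcard : (Nat.card G : ℂ) = Nat.card H * 2 := by
    rw [← H.card_mul_index, hH, Nat.cast_mul, Nat.cast_ofNat]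
  have hH0 : (Nat.card H : ℂ) ≠ 0 := Nat.cast_ne_zero.2 Nat.card_pos.ne'
  rw [hcard] at hsum
  field_simp
  linear_combination hsum / 2

namespace G36

def sign (k : ZMod 2) : ZMod 4 := (-1) ^ k.val

def parity : ZMod 4 →+* ZMod 2 := ZMod.castHom (by norm_num) _

@[simp] theorem sign_zero : sign 0 = 1 := rfl
@[simp] theorem sign_one : sign 1 = -1 := rfl

theorem sign_add : ∀ k l : ZMod 2, sign (k + l) = sign k * sign l := by decide
theorem sign_mul_self : ∀ k : ZMod 2, sign k * sign k = 1 := by decide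
theorem parity_sign : ∀ k : ZMod 2, parity (sign k) = 1 := by decide

theorem sign_mul_of_parity_eq_zero :
    ∀ (k : ZMod 2) (y : ZMod 4), parity y = 0 → sign k * y = y := by
  decide

theorem neg_eq_of_parity_eq_zero : ∀ y : ZMod 4, parity y = 0 → -y = y := by decide
theorem neg_eq_add_two_of_parity_ne_zero : ∀ y : ZMod 4, parity y ≠ 0 → -y = y + 2 := by decide

noncomputable def iPow (y : ZMod 4) : ℂ := Complex.I ^ y.val

theorem iPow_add (y y' : ZMod 4) : iPow (y + y') = iPow y * iPow y' := by
  rw [iPow, iPow, iPow, ZMod.val_add, ← pow_add, ← pow_eq_pow_mod _ Complex.I_pow_four]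

theorem iPow_add_two (y : ZMod 4) : iPow (y + 2) = -iPow y := by
  rw [iPow_add, show iPow 2 = Complex.I ^ 2 from rfl, Complex.I_sq, mul_neg_one]

/-- `⟨z, y, x⟩` stands for `c ^ z * b ^ y * a ^ x`; the multiplication below is read off from
`a ^ x * b = b ^ ((-1) ^ x) * a ^ x` and `a ^ x * c = c * a ^ (-x)`. -/
@[ext] structure Model where
  z : ZMod 2
  y : ZMod 4
  x : ZMod 4

namespace Model

instance : Mul Model :=
  ⟨fun m n => ⟨m.z + n.z, m.y + sign (parity m.x) * n.y, sign n.z * m.x + n.x⟩⟩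
instance : One Model := ⟨⟨0, 0, 0⟩⟩
instance : Inv Model := ⟨fun m => ⟨-m.z, -(sign (parity m.x) * m.y), -(sign m.z * m.x)⟩⟩

@[simp] theorem mul_z (m n : Model) : (m * n).z = m.z + n.z := rfl
@[simp] theorem mul_y (m n : Model) : (m * n).y = m.y + sign (parity m.x) * n.y := rfl
@[simp] theorem mul_x (m n : Model) : (m * n).x = sign n.z * m.x + n.x := rfl
@[simp] theorem one_z : (1 : Model).z = 0 := rfl
@[simp] theorem one_y : (1 : Model).y = 0 := rfl
@[simp] theorem one_x : (1 : Model).x = 0 := rfl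
@[simp] theorem inv_z (m : Model) : m⁻¹.z = -m.z := rfl
@[simp] theorem inv_y (m : Model) : m⁻¹.y = -(sign (parity m.x) * m.y) := rfl
@[simp] theorem inv_x (m : Model) : m⁻¹.x = -(sign m.z * m.x) := rfl

instance : Group Model := Group.ofLeftAxioms
  (fun m n p => by
    ext <;> simp only [mul_z, mul_y, mul_x, map_add, map_mul, parity_sign, one_mul, sign_add] <;>
      ring)
  (fun m => by ext <;> simp)
  (fun m => by
    ext <;>
      simp [map_neg, map_mul, parity_sign, ← mul_assoc, sign_mul_self, CharTwo.add_self_eq_zero])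

def aM : Model := ⟨0, 0, 1⟩
def bM : Model := ⟨0, 1, 0⟩
def cM : Model := ⟨1, 0, 0⟩

theorem conj_aM_y (m : Model) : (aM⁻¹ * m * aM).y = -m.y := by
  simp [aM, parity_sign]

theorem conj_bM_y (m : Model) :
    (bM⁻¹ * m * bM).y = if parity m.x = 0 then m.y else m.y + 2 := by
  simp only [bM, mul_y, mul_x, inv_y, inv_x, mul_zero, neg_zero, zero_add, map_zero, sign_zero,
    one_mul, mul_one]
  generalize parity m.x = p, m.y = y
  revert p y
  decide

def parityX : Model →* Multiplicative (ZMod 2) where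
  toFun m := .ofAdd (parity m.x)
  map_one' := rfl
  map_mul' m n := by simp [parity_sign, ← ofAdd_add]

def parityY : Model →* Multiplicative (ZMod 2) where
  toFun m := .ofAdd (parity m.y)
  map_one' := rfl
  map_mul' m n := by simp [parity_sign, ← ofAdd_add]

theorem parityX_eq_one_iff (m : Model) : parityX m = 1 ↔ parity m.x = 0 := ofAdd_eq_one
theorem parityY_eq_one_iff (m : Model) : parityY m = 1 ↔ parity m.y = 0 := ofAdd_eq_one

@[simp] theorem parityX_aM : parityX aM = .ofAdd 1 := rfl
@[simp] theorem parityX_bM : parityX bM = 1 := rfl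
@[simp] theorem parityX_cM : parityX cM = 1 := rfl
@[simp] theorem parityY_aM : parityY aM = 1 := rfl
@[simp] theorem parityY_bM : parityY bM = .ofAdd 1 := rfl
@[simp] theorem parityY_cM : parityY cM = 1 := rfl

theorem ite_iPow_conj_aM_eq_ite_iPow_conj_bM (m : Model) :
    (if parityX m = 1 then iPow m.y + iPow (aM⁻¹ * m * aM).y else 0) =
      if parityY m = 1 then iPow m.y + iPow (bM⁻¹ * m * bM).y else 0 := by
  simp only [parityX_eq_one_iff, parityY_eq_one_iff, conj_aM_y, conj_bM_y]
  by_cases hx : parity m.x = 0 <;> by_cases hy : parity m.y = 0 <;>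
    simp [hx, hy, neg_eq_of_parity_eq_zero, neg_eq_add_two_of_parity_ne_zero, iPow_add_two]

end Model

open Model

abbrev a : PresentedGroup G36rels := .of 0
abbrev b : PresentedGroup G36rels := .of 1
abbrev c : PresentedGroup G36rels := .of 2

theorem a_pow_four : a ^ 4 = 1 :=
  PresentedGroup.one_of_mem (x := .of 0 ^ 4) (by simp [G36rels])

theorem b_pow_four : b ^ 4 = 1 :=
  PresentedGroup.one_of_mem (x := .of 1 ^ 4) (by simp [G36rels])

theorem c_pow_two : c ^ 2 = 1 :=
  PresentedGroup.one_of_mem (x := .of 2 ^ 2) (by simp [G36rels])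

theorem b_mul_c : b * c = c * b := by
  have h : b * c * b⁻¹ * c⁻¹ = 1 :=
    PresentedGroup.one_of_mem (x := .of 1 * .of 2 * (.of 1)⁻¹ * (.of 2)⁻¹) (by simp [G36rels])
  rw [← mul_inv_eq_one, ← h]
  group

theorem a_mul_b : a * b = b ^ 3 * a := by
  have h : a⁻¹ * b * a * b = 1 :=
    PresentedGroup.one_of_mem (x := (.of 0)⁻¹ * .of 1 * .of 0 * .of 1) (by simp [G36rels])
  have hb : b⁻¹ = b ^ 3 := inv_eq_of_mul_eq_one_right (by rw [← pow_succ', b_pow_four])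
  calc a * b = b⁻¹ * (a * (a⁻¹ * b * a * b)) := by group
    _ = b ^ 3 * a := by rw [h, mul_one, hb]

theorem a_mul_c : a * c = c * a ^ 3 := by
  have h : c * a * c * a = 1 :=
    PresentedGroup.one_of_mem (x := .of 2 * .of 0 * .of 2 * .of 0) (by simp [G36rels])
  have ha : a⁻¹ = a ^ 3 := inv_eq_of_mul_eq_one_right (by rw [← pow_succ', a_pow_four])
  have hc : c⁻¹ = c := inv_eq_of_mul_eq_one_right (by rw [← pow_two, c_pow_two])
  calc a * c = c⁻¹ * (c * a * c * a) * a⁻¹ := by group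
    _ = c * a ^ 3 := by rw [h, mul_one, hc, ha]

theorem of_inv (i : Fin 3) : (PresentedGroup.of i : PresentedGroup G36rels)⁻¹ = .of i ^ 3 := by
  have h : (PresentedGroup.of i : PresentedGroup G36rels) ^ 4 = 1 := by
    fin_cases i
    exacts [a_pow_four, b_pow_four, (pow_mul c 2 2).trans (by rw [c_pow_two, one_pow])]
  exact inv_eq_of_mul_eq_one_right (by rw [← pow_succ', h])

theorem semiconjBy_a_pow_b (n : ℕ) : SemiconjBy (a ^ n) b (b ^ 3 ^ n) := by
  induction n with
  | zero => simp
  | succ n ih =>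
    rw [pow_succ', pow_succ', pow_mul]
    exact (SemiconjBy.pow_right a_mul_b _).mul_left ih

theorem a_pow_mul_c (n : ℕ) : a ^ n * c = c * a ^ (3 * n) := by
  rw [pow_mul]
  exact (SemiconjBy.pow_right a_mul_c.symm n).symm

def word (z y x : ℕ) : PresentedGroup G36rels := c ^ z * b ^ y * a ^ x

theorem word_mul_a (z y x : ℕ) : word z y x * a = word z y (x + 1) := by
  rw [word, word, pow_succ, mul_assoc]

theorem word_mul_b (z y x : ℕ) : word z y x * b = word z (y + 3 ^ x) x := by
  rw [word, word, mul_assoc, (semiconjBy_a_pow_b x).eq, ← mul_assoc, mul_assoc (c ^ z), ← pow_add]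

theorem word_mul_c (z y x : ℕ) : word z y x * c = word (z + 1) y (3 * x) := by
  rw [word, word, mul_assoc, a_pow_mul_c, ← mul_assoc, mul_assoc (c ^ z),
    ((Commute.pow_left b_mul_c y) : b ^ y * c = c * b ^ y), ← mul_assoc, ← pow_succ]

theorem exists_eq_word (g : PresentedGroup G36rels) : ∃ z y x, g = word z y x := by
  have mul_of : ∀ g, (∃ z y x, g = word z y x) → ∀ i, ∃ z y x, g * .of i = word z y x := by
    rintro g ⟨z, y, x, rfl⟩ i
    fin_cases i
    exacts [⟨_, _, _, word_mul_a z y x⟩, ⟨_, _, _, word_mul_b z y x⟩, ⟨_, _, _, word_mul_c z y x⟩]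
  have hg : g ∈ Subgroup.closure (Set.range PresentedGroup.of) := by simp
  induction hg using Subgroup.closure_induction_right with
  | one => exact ⟨0, 0, 0, by simp [word]⟩
  | mul_right g _ _ hs ih =>
    obtain ⟨i, rfl⟩ := hs
    exact mul_of g ih i
  | mul_inv_cancel g _ _ hs ih =>
    obtain ⟨i, rfl⟩ := hs
    rw [of_inv, pow_succ, pow_two, ← mul_assoc, ← mul_assoc]
    exact mul_of _ (mul_of _ (mul_of g ih i) i) i

def toModel : PresentedGroup G36rels →* Model :=
  PresentedGroup.toGroup (f := ![aM, bM, cM]) <| by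
    intro r hr
    simp only [G36rels, Set.mem_insert_iff, Set.mem_singleton_iff] at hr
    rcases hr with rfl | rfl | rfl | rfl | rfl | rfl <;>
      simp only [map_pow, map_mul, map_inv, FreeGroup.lift_apply_of] <;> ext <;> rfl

@[simp] theorem toModel_a : toModel a = aM := PresentedGroup.toGroup.of _
@[simp] theorem toModel_b : toModel b = bM := PresentedGroup.toGroup.of _
@[simp] theorem toModel_c : toModel c = cM := PresentedGroup.toGroup.of _

abbrev H : Subgroup (PresentedGroup G36rels) := Subgroup.closure {b, c, a ^ 2}
abbrev H' : Subgroup (PresentedGroup G36rels) := Subgroup.closure {b ^ 2, c, a}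

theorem H_eq_ker : H = (parityX.comp toModel).ker := by
  refine le_antisymm ((Subgroup.closure_le _).2 ?_) fun g hg => ?_
  · rintro _ (rfl | rfl | rfl) <;> simp [Multiplicative.ofAdd_one_pow_eq_one_iff]
  · obtain ⟨z, y, x, rfl⟩ := exists_eq_word g
    simp only [word, MonoidHom.mem_ker, MonoidHom.comp_apply, map_mul, map_pow, toModel_a,
      toModel_b, toModel_c, parityX_aM, parityX_bM, parityX_cM, one_pow, one_mul,
      Multiplicative.ofAdd_one_pow_eq_one_iff] at hg
    obtain ⟨k, rfl⟩ := hg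
    rw [word, pow_mul]
    exact mul_mem (mul_mem (pow_mem (Subgroup.subset_closure (by simp)) z)
      (pow_mem (Subgroup.subset_closure (by simp)) y))
      (pow_mem (Subgroup.subset_closure (by simp)) k)

theorem H'_eq_ker : H' = (parityY.comp toModel).ker := by
  refine le_antisymm ((Subgroup.closure_le _).2 ?_) fun g hg => ?_
  · rintro _ (rfl | rfl | rfl) <;> simp [Multiplicative.ofAdd_one_pow_eq_one_iff]
  · obtain ⟨z, y, x, rfl⟩ := exists_eq_word g
    simp only [word, MonoidHom.mem_ker, MonoidHom.comp_apply, map_mul, map_pow, toModel_a,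
      toModel_b, toModel_c, parityY_aM, parityY_bM, parityY_cM, one_pow, one_mul, mul_one,
      Multiplicative.ofAdd_one_pow_eq_one_iff] at hg
    obtain ⟨k, rfl⟩ := hg
    rw [word, pow_mul]
    exact mul_mem (mul_mem (pow_mem (Subgroup.subset_closure (by simp)) z)
      (pow_mem (Subgroup.subset_closure (by simp)) k))
      (pow_mem (Subgroup.subset_closure (by simp)) x)

theorem mem_H_iff (g : PresentedGroup G36rels) : g ∈ H ↔ parityX (toModel g) = 1 := by
  rw [H_eq_ker]
  rfl

theorem mem_H'_iff (g : PresentedGroup G36rels) : g ∈ H' ↔ parityY (toModel g) = 1 := by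
  rw [H'_eq_ker]
  rfl

theorem index_H : H.index = 2 := by
  rw [H_eq_ker]
  exact MonoidHom.index_ker_eq_two _ (t := a) (by simp)

theorem index_H' : H'.index = 2 := by
  rw [H'_eq_ker]
  exact MonoidHom.index_ker_eq_two _ (t := b) (by simp)

theorem a_notMem_H : a ∉ H := by simp [mem_H_iff]
theorem b_notMem_H' : b ∉ H' := by simp [mem_H'_iff]

/-- `c ^ z * b ^ y * a ^ x ↦ i ^ y`, a common extension of `λ` and `λ'` to `G36`. -/
noncomputable def iPowB (g : PresentedGroup G36rels) : ℂ := iPow (toModel g).y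

theorem lambda_apply (l : H →* ℂ) (hb : l ⟨b, Subgroup.subset_closure (by simp)⟩ = Complex.I)
    (hc : l ⟨c, Subgroup.subset_closure (by simp)⟩ = 1)
    (ha : l ⟨a ^ 2, Subgroup.subset_closure (by simp)⟩ = 1) (h : H) :
    l h = iPowB h := by
  refine Subgroup.closure_apply_eq_of_eqOn l iPowB rfl (fun x hx y _ => ?_) ?_ h
  · rw [mem_H_iff, parityX_eq_one_iff] at hx
    rw [iPowB, iPowB, iPowB, map_mul, mul_y, hx, sign_zero, one_mul, iPow_add]
  · rintro _ (rfl | rfl | rfl)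
    · rw [hb]; exact (pow_one _).symm
    · rw [hc]; exact (pow_zero _).symm
    · rw [ha]; exact (pow_zero _).symm

theorem lambda'_apply (l : H' →* ℂ) (ha : l ⟨a, Subgroup.subset_closure (by simp)⟩ = 1)
    (hc : l ⟨c, Subgroup.subset_closure (by simp)⟩ = 1)
    (hb : l ⟨b ^ 2, Subgroup.subset_closure (by simp)⟩ = -1) (h : H') :
    l h = iPowB h := by
  refine Subgroup.closure_apply_eq_of_eqOn l iPowB rfl (fun x _ y hy => ?_) ?_ h
  · rw [mem_H'_iff, parityY_eq_one_iff] at hy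
    rw [iPowB, iPowB, iPowB, map_mul, mul_y, sign_mul_of_parity_eq_zero _ _ hy, iPow_add]
  · rintro _ (rfl | rfl | rfl)
    · rw [hb]; exact (Complex.I_sq).symm
    · rw [hc]; exact (pow_zero _).symm
    · rw [ha]; exact (pow_zero _).symm

end G36

open G36 in
/-- In `G36`, with `H = ⟨b, c, a²⟩` and `H' = ⟨b², c, a⟩`, let `λ` be the linear
character of `H` with `λ(b) = i`, `λ(c) = λ(a²) = 1`, and `λ'` the linear character
of `H'` with `λ'(a) = λ'(c) = 1`, `λ'(b²) = −1`.  Then the induced characters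
`Ind_H^G(λ)` and `Ind_{H'}^G(λ')` are equal. -/
theorem G36_induced_characters_eq
    [Fintype (PresentedGroup G36rels)] :
    ∀ (a b c : PresentedGroup G36rels),
    a = PresentedGroup.of 0 → b = PresentedGroup.of 1 → c = PresentedGroup.of 2 →
    ∀ (l : (Subgroup.closure {b, c, a ^ 2} : Subgroup (PresentedGroup G36rels)) →* ℂ)
      (l' : (Subgroup.closure {b ^ 2, c, a} : Subgroup (PresentedGroup G36rels)) →* ℂ),
    l ⟨b, Subgroup.subset_closure (by simp)⟩ = Complex.I →
    l ⟨c, Subgroup.subset_closure (by simp)⟩ = 1 →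
    l ⟨a ^ 2, Subgroup.subset_closure (by simp)⟩ = 1 →
    l' ⟨a, Subgroup.subset_closure (by simp)⟩ = 1 →
    l' ⟨c, Subgroup.subset_closure (by simp)⟩ = 1 →
    l' ⟨b ^ 2, Subgroup.subset_closure (by simp)⟩ = -1 →
    indChar (Subgroup.closure {b, c, a ^ 2}) (fun x => l x) =
      indChar (Subgroup.closure {b ^ 2, c, a}) (fun x => l' x) := by
  rintro _ _ _ rfl rfl rfl l l' hb hc ha ha' hc' hb'
  funext g
  rw [indChar_of_index_eq_two index_H a_notMem_H l _ (lambda_apply l hb hc ha),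
    indChar_of_index_eq_two index_H' b_notMem_H' l' _ (lambda'_apply l' ha' hc' hb')]
  simp only [mem_H_iff, mem_H'_iff, iPowB, map_mul, map_inv, toModel_a, toModel_b]
  exact Model.ite_iPow_conj_aM_eq_ite_iPow_conj_bM (toModel g)
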